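/- arXiv:2006.13636 — 2 statements merged into one kernel-verified Lean document; each statement's English description precedes it below -/
import Mathlib

section
/- Let S be a nonempty finite set and w : S → ℝ a non-negative weight function, and let V be a nonempty subset of S. Then D_w(V) ≤ 2·D_w(S). (In particular, in a hierarchical tree, the discrepancy of any descendant node is at most twice the discrepancy of any of its ancestors.) -/
/-!
The mean is a 2-approximate minimiser of the L¹ deviation: for every centre `c`, writing `m` for
the mean of `w` on `V`, the triangle inequality gives `|m - w x| ≤ |m - c| + |c - w x|`, and
`|V| · |m - c| = |∑_{x ∈ V} (w x - c)| ≤ ∑_{x ∈ V} |c - w x|`, so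
`D_w(V) ≤ 2 ∑_{x ∈ V} |c - w x|`. Take `c` to be the mean of `w` on `S` and enlarge the sum
from `V` to `S`.
-/

/-- The discrepancy of a nonempty finite set `V` with respect to a non-negative weight
function `w`: the sum over `x ∈ V` of `|w(V)/|V| - w(x)|`. -/
noncomputable def setDisc {α : Type*} (w : α → ℝ) (V : Finset α) : ℝ :=
  ∑ x ∈ V, |(∑ y ∈ V, w y) / (V.card : ℝ) - w x|

open Finset

lemma card_mul_abs_mean_sub_le {α : Type*} (w : α → ℝ) (V : Finset α) (c : ℝ) :
    #V * |(∑ y ∈ V, w y) / #V - c| ≤ ∑ x ∈ V, |c - w x| := by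
  have hcard_mul : (#V : ℝ) * ((∑ y ∈ V, w y) / #V - c) = ∑ x ∈ V, (w x - c) := by
    rw [← expect_eq_sum_div_card, mul_sub, card_mul_expect, sum_sub_distrib, sum_const,
      nsmul_eq_mul]
  calc (#V : ℝ) * |(∑ y ∈ V, w y) / #V - c|
      = |∑ x ∈ V, (w x - c)| := by rw [← hcard_mul, abs_mul, Nat.abs_cast]
    _ ≤ ∑ x ∈ V, |w x - c| := abs_sum_le_sum_abs _ _
    _ = ∑ x ∈ V, |c - w x| := by simp only [abs_sub_comm]

lemma setDisc_le_two_mul_sum_abs_sub {α : Type*} (w : α → ℝ) (V : Finset α) (c : ℝ) :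
    setDisc w V ≤ 2 * ∑ x ∈ V, |c - w x| := by
  set m := (∑ y ∈ V, w y) / #V
  calc setDisc w V = ∑ x ∈ V, |(m - c) + (c - w x)| := by
        simp only [setDisc, m, sub_add_sub_cancel]
    _ ≤ ∑ x ∈ V, (|m - c| + |c - w x|) := sum_le_sum fun x _ => abs_add_le _ _
    _ = #V * |m - c| + ∑ x ∈ V, |c - w x| := by
      rw [sum_add_distrib, sum_const, nsmul_eq_mul]
    _ ≤ 2 * ∑ x ∈ V, |c - w x| := by linarith [card_mul_abs_mean_sub_le w V c]

theorem stmt4_general {α : Type*} (S : Finset α) (w : α → ℝ) (V : Finset α) (hV : V ⊆ S) :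
    setDisc w V ≤ 2 * setDisc w S :=
  calc setDisc w V ≤ 2 * ∑ x ∈ V, |(∑ y ∈ S, w y) / #S - w x| :=
        setDisc_le_two_mul_sum_abs_sub w V _
    _ ≤ 2 * setDisc w S := by
      gcongr
      exact sum_le_sum_of_subset_of_nonneg hV fun _ _ _ => abs_nonneg _

/-- For a nonempty subset `V` of a nonempty finite set `S`, the discrepancy of `V` is at most
twice the discrepancy of `S`. -/
theorem stmt4 {α : Type*} [DecidableEq α] (S : Finset α) (hS : S.Nonempty)
    (w : α → ℝ) (hw : ∀ x ∈ S, 0 ≤ w x)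
    (V : Finset α) (hV : V ⊆ S) (hVne : V.Nonempty) :
    setDisc w V ≤ 2 * setDisc w S :=
  stmt4_general S w V hV
end

section
/- Let T be a hierarchical tree with split quality q for some q ∈ (0,1). Let K ≥ 2 be an integer and let P and Q be prunings of T with |P| = |Q| = K. Suppose there are real numbers β ≥ 1 and d ≥ 0 such that: (i) D_v ≤ β·d for every node v ∈ P, and (ii) d ≤ D_u for every node u of T that is a strict ancestor of some node of P. Then D_P ≤ 2β·(log K / log(1/q) + 1)·D_Q. -/
/-- A hierarchical tree: a finite rooted binary tree in which every internal node has exactly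
two children and every leaf carries a real weight. -/
inductive HTree : Type
  | leaf (w : ℝ) : HTree
  | node (l r : HTree) : HTree

namespace HTree

/-- All leaf weights are non-negative. -/
def NonnegWeights : HTree → Prop
  | leaf w => 0 ≤ w
  | node l r => l.NonnegWeights ∧ r.NonnegWeights

/-- The subtree of `t` reached by following the path `p` from the root
(`false` = left child, `true` = right child), if it exists. -/
def subtreeAt : HTree → List Bool → Option HTree
  | t, [] => some t
  | leaf _, _ :: _ => none
  | node l r, b :: p => (if b then r else l).subtreeAt p

/-- `p` is (the path to) a node of `t`. -/
def IsNodePath (t : HTree) (p : List Bool) : Prop := (t.subtreeAt p).isSome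

/-- `p` is (the path to) a leaf of `t`. -/
def IsLeafPath (t : HTree) (p : List Bool) : Prop := ∃ w, t.subtreeAt p = some (leaf w)

/-- The list of weights of the leaves weakly below the root of `t`. -/
def leafWeights : HTree → List ℝ
  | leaf w => [w]
  | node l r => l.leafWeights ++ r.leafWeights

/-- The discrepancy of the root of `t`: `∑_{x ∈ L_t} |w_t/N_t − w(x)|`. -/
noncomputable def disc (t : HTree) : ℝ :=
  (t.leafWeights.map
    (fun x => |t.leafWeights.sum / (t.leafWeights.length : ℝ) - x|)).sum

/-- The discrepancy of the node of `t` at path `p` (junk value `0` if there is no such node). -/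
noncomputable def discAt (t : HTree) (p : List Bool) : ℝ :=
  ((t.subtreeAt p).map disc).getD 0

/-- A pruning of `t`: a finite set of nodes such that every leaf of `t` has exactly one
weak ancestor (i.e. prefix) in the set. -/
def IsPruning (t : HTree) (P : Finset (List Bool)) : Prop :=
  (∀ p ∈ P, t.IsNodePath p) ∧ ∀ q, t.IsLeafPath q → ∃! p, p ∈ P ∧ p <+: q

/-- The discrepancy of a pruning: the sum of the discrepancies of its nodes. -/
noncomputable def discP (t : HTree) (P : Finset (List Bool)) : ℝ := ∑ p ∈ P, t.discAt p

/-- The tree `t` has split quality `q`: for every node and every one of its children,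
the discrepancy of the child is at most `q` times the discrepancy of the parent. -/
def HasSplitQuality (t : HTree) (q : ℝ) : Prop :=
  ∀ p, t.IsNodePath p → ∀ b : Bool, t.IsNodePath (p ++ [b]) →
    t.discAt (p ++ [b]) ≤ q * t.discAt p

end HTree

/-!
Fix `u ∈ Q` and let `M` be the nodes of `P` weakly below `u`. Discrepancy is subadditive over
antichains up to a factor 2 (compare every subtree with the centre of `u`), so `∑_M D ≤ 2 D_u`;
along a path it decays by the factor `q` per level; and every strict ancestor of `M` has
discrepancy at least `d`. The subtree spanned by `M` has at least `|M| - 1` internal nodes. If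
it is shallow, of depth at most `log_{1/q} K`, each level of internal nodes is an antichain and
carries at most `2 D_u`, so `(|M| - 1) d ≤ 2 log_{1/q} K · D_u`; if it is deep, then `d` is at
most `q^depth · D_u` and already `K d ≤ 2 D_u`. For `q ≤ 1/2`, where `log_{1/q} K` may be small,
Kraft's inequality gives instead `∑_M D ≤ 2 q D_u` and `|M| d ≤ 2 D_u`, and `q ≤ log_{1/q} K`.

A node of `P` lying strictly above `Q` costs at most `β d`; it has at least two nodes of `Q`
below it, none of which lies above a node of `P`. Since `|P| = |Q|`, the number of such nodes is
at most `∑_{u ∈ Q} (|M_u| - 1)`, so they are paid for by the terms `β d (|M_u| - 1)` above.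
-/

open Finset

lemma List.sum_map_abs_mean_sub_le (l : List ℝ) (c : ℝ) :
    (l.map fun x => |l.sum / l.length - x|).sum ≤ 2 * (l.map fun x => |c - x|).sum := by
  by_cases hl : l = []
  · simp [hl]
  set μ := l.sum / l.length
  have hμ : l.sum - l.length * c = l.length * (μ - c) := by
    rw [mul_sub, mul_div_cancel₀ _ (by simpa using hl)]
  have hcentre : l.length * |μ - c| ≤ (l.map fun x => |c - x|).sum :=
    calc l.length * |μ - c| = |(l.map (· - c)).sum| := by
          rw [← abs_of_nonneg (Nat.cast_nonneg (α := ℝ) l.length), ← abs_mul, ← hμ]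
          simp [sub_eq_add_neg, List.sum_map_add]
      _ ≤ (l.map fun x => |x - c|).sum := by
          simpa [Function.comp_def] using
            List.le_sum_of_subadditive abs abs_zero.le abs_add_le (l.map (· - c))
      _ = (l.map fun x => |c - x|).sum := by simp_rw [abs_sub_comm]
  calc (l.map fun x => |μ - x|).sum ≤ (l.map fun x => |μ - c| + |c - x|).sum :=
        List.sum_le_sum fun x _ => abs_sub_le μ c x
    _ = l.length * |μ - c| + (l.map fun x => |c - x|).sum := by simp [List.sum_map_add]
    _ ≤ 2 * (l.map fun x => |c - x|).sum := by linarith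

lemma Real.self_le_logb_one_div {q x : ℝ} (hq0 : 0 < q) (hq1 : q < 1) (hx : 2 ≤ x) :
    q ≤ Real.logb (1 / q) x := by
  rw [Real.le_logb_iff_rpow_le (by rw [lt_div_iff₀ hq0]; linarith) (by linarith)]
  calc (1 / q) ^ q = (1 + (1 / q - 1)) ^ q := by ring_nf
    _ ≤ 1 + q * (1 / q - 1) :=
      rpow_one_add_le_one_add_mul_self (by linarith [one_div_pos.mpr hq0]) hq0.le hq1.le
    _ ≤ x := by rw [mul_sub, mul_one_div_cancel hq0.ne']; linarith

namespace Finset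

variable {α : Type*}

noncomputable def descend (A : Finset (List α)) (b : α) : Finset (List α) :=
  A.preimage (List.cons b) List.cons_injective.injOn

@[simp]
lemma mem_descend {A : Finset (List α)} {b : α} {w : List α} : w ∈ A.descend b ↔ b :: w ∈ A :=
  mem_preimage

lemma _root_.IsAntichain.descend {A : Finset (List α)}
    (hA : IsAntichain (· <+: ·) (A : Set (List α))) (b : α) :
    IsAntichain (· <+: ·) (A.descend b : Set (List α)) := by
  intro v hv w hw hne hvw
  exact hne (List.cons_injective (hA.eq (by simpa using hv) (by simpa using hw)
    (List.cons_prefix_cons.mpr ⟨rfl, hvw⟩)))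

lemma _root_.IsAntichain.eq_singleton_nil {A : Finset (List α)}
    (hA : IsAntichain (· <+: ·) (A : Set (List α))) (h : [] ∈ A) : A = {[]} :=
  eq_singleton_iff_unique_mem.mpr ⟨h, fun _ hw => (hA.eq h hw List.nil_prefix).symm⟩

section DecidableEq

variable [DecidableEq α]

def strictPrefixes (A : Finset (List α)) : Finset (List α) :=
  A.biUnion fun p => p.inits.toFinset.erase p

lemma mem_strictPrefixes {A : Finset (List α)} {v : List α} :
    v ∈ A.strictPrefixes ↔ ∃ p ∈ A, v <+: p ∧ v ≠ p := by
  simp [strictPrefixes, and_comm]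

lemma descend_strictPrefixes (A : Finset (List α)) (b : α) :
    A.strictPrefixes.descend b = (A.descend b).strictPrefixes := by
  ext w
  simp only [mem_descend, mem_strictPrefixes]
  constructor
  · rintro ⟨p, hp, hwp, hne⟩
    obtain ⟨p', rfl, hwp'⟩ := List.cons_prefix_iff.mp hwp
    exact ⟨p', hp, hwp', fun h => hne (h ▸ rfl)⟩
  · rintro ⟨p', hp', hwp', hne⟩
    exact ⟨b :: p', hp', List.cons_prefix_cons.mpr ⟨rfl, hwp'⟩, by simpa using hne⟩

lemma descend_erase_nil (A : Finset (List α)) (b : α) : (A.erase []).descend b = A.descend b := by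
  ext w
  simp

theorem sum_eq_sum_filter_add_sum_sum_filter_prefix {M : Type*} [AddCommMonoid M]
    {P Q : Finset (List α)} (hQ : IsAntichain (· <+: ·) (Q : Set (List α))) (f : List α → M) :
    ∑ p ∈ P, f p =
      ∑ p ∈ P with ¬ ∃ u ∈ Q, u <+: p, f p + ∑ u ∈ Q, ∑ p ∈ P with u <+: p, f p := by
  rw [← sum_filter_not_add_sum_filter P (fun p => ∃ u ∈ Q, u <+: p), ← sum_biUnion]
  · congr 1
    refine sum_congr (ext fun p => ?_) fun _ _ => rfl
    simp only [mem_filter, mem_biUnion]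
    tauto
  · intro u₁ hu₁ u₂ hu₂ hne
    refine disjoint_left.mpr fun p hp₁ hp₂ => hne ?_
    rcases List.prefix_or_prefix_of_prefix (mem_filter.mp hp₁).2 (mem_filter.mp hp₂).2 with h | h
    · exact hQ.eq hu₁ hu₂ h
    · exact (hQ.eq hu₂ hu₁ h).symm

end DecidableEq

lemma sum_eq_sum_descend_add_sum_descend {M : Type*} [AddCommMonoid M] {A : Finset (List Bool)}
    (hA : [] ∉ A) (f : List Bool → M) :
    ∑ v ∈ A, f v = ∑ w ∈ A.descend false, f (false :: w) + ∑ w ∈ A.descend true, f (true :: w) := by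
  classical
  rw [descend, descend, sum_preimage', sum_preimage', ← sum_filter_add_sum_filter_not A
    (· ∈ Set.range (List.cons false))]
  congr 1
  refine sum_congr (filter_congr fun v hv => ?_) fun _ _ => rfl
  match v, hv with
  | [], hv => exact absurd hv hA
  | b :: _, _ => cases b <;> simp

lemma card_eq_card_descend_add_card_descend {A : Finset (List Bool)} (hA : [] ∉ A) :
    #A = #(A.descend false) + #(A.descend true) := by
  simp only [card_eq_sum_ones]
  exact sum_eq_sum_descend_add_sum_descend hA _

@[elab_as_elim]
theorem prefixAntichain_induction {motive : Finset (List Bool) → Prop} (empty : motive ∅)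
    (nil : motive {[]})
    (descend : ∀ A, [] ∉ A → motive (A.descend false) → motive (A.descend true) → motive A)
    {A : Finset (List Bool)} (hA : IsAntichain (· <+: ·) (A : Set (List Bool))) : motive A := by
  suffices key : ∀ n, ∀ A : Finset (List Bool), (∀ v ∈ A, v.length ≤ n) →
      IsAntichain (· <+: ·) (A : Set (List Bool)) → motive A from
    key _ A (fun v hv => le_sup (f := List.length) hv) hA
  intro n
  induction n with
  | zero =>
    intro A hlen hA
    rcases A.eq_empty_or_nonempty with rfl | ⟨v, hv⟩
    · exact empty
    · rw [hA.eq_singleton_nil (List.eq_nil_of_length_eq_zero (Nat.le_zero.mp (hlen v hv)) ▸ hv)]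
      exact nil
  | succ n ih =>
    intro A hlen hA
    by_cases h0 : [] ∈ A
    · exact hA.eq_singleton_nil h0 ▸ nil
    refine descend A h0 (ih _ ?_ (hA.descend _)) (ih _ ?_ (hA.descend _)) <;>
      exact fun w hw => Nat.le_of_succ_le_succ (hlen _ (mem_descend.mp hw))

theorem sum_half_pow_length_le_one {A : Finset (List Bool)}
    (hA : IsAntichain (· <+: ·) (A : Set (List Bool))) : ∑ v ∈ A, (1 / 2 : ℝ) ^ v.length ≤ 1 := by
  refine prefixAntichain_induction (by simp) (by simp) (fun A hA0 ih₀ ih₁ => ?_) hA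
  rw [sum_eq_sum_descend_add_sum_descend hA0]
  simp only [List.length_cons, pow_succ, ← sum_mul]
  linarith

theorem card_le_two_pow {A : Finset (List Bool)} (hA : IsAntichain (· <+: ·) (A : Set (List Bool)))
    {n : ℕ} (hlen : ∀ v ∈ A, v.length ≤ n) : (#A : ℝ) ≤ 2 ^ n := by
  have : (#A : ℝ) * (1 / 2) ^ n ≤ 1 :=
    calc (#A : ℝ) * (1 / 2) ^ n = ∑ _v ∈ A, (1 / 2 : ℝ) ^ n := by simp
      _ ≤ ∑ v ∈ A, (1 / 2 : ℝ) ^ v.length :=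
        sum_le_sum fun v hv => pow_le_pow_of_le_one (by norm_num) (by norm_num) (hlen v hv)
      _ ≤ 1 := sum_half_pow_length_le_one hA
  rwa [one_div, inv_pow, ← div_eq_mul_inv, div_le_one (by positivity)] at this

theorem card_le_card_strictPrefixes_add_one {A : Finset (List Bool)}
    (hA : IsAntichain (· <+: ·) (A : Set (List Bool))) : #A ≤ #A.strictPrefixes + 1 := by
  refine prefixAntichain_induction (by simp) (by simp) (fun A hA0 ih₀ ih₁ => ?_) hA
  rcases A.eq_empty_or_nonempty with rfl | ⟨p, hp⟩
  · simp
  have hnil : [] ∈ A.strictPrefixes :=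
    mem_strictPrefixes.mpr ⟨p, hp, List.nil_prefix, fun h => hA0 (h ▸ hp)⟩
  have hsplit : #A.strictPrefixes =
      #(A.descend false).strictPrefixes + #(A.descend true).strictPrefixes + 1 := by
    rw [← card_erase_add_one hnil, card_eq_card_descend_add_card_descend (notMem_erase _ _),
      descend_erase_nil, descend_erase_nil, descend_strictPrefixes, descend_strictPrefixes]
  rw [card_eq_card_descend_add_card_descend hA0]
  omega

end Finset

namespace HTree

variable {t s : HTree} {u v : List Bool} {q β d : ℝ} {K : ℕ} {M P Q : Finset (List Bool)}

lemma subtreeAt_append (t : HTree) (u w : List Bool) :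
    t.subtreeAt (u ++ w) = (t.subtreeAt u).bind (·.subtreeAt w) := by
  induction u generalizing t with
  | nil => cases t <;> rfl
  | cons b u ih => cases t <;> simp [subtreeAt, ih]

lemma IsNodePath.of_prefix (hv : t.IsNodePath v) (huv : u <+: v) : t.IsNodePath u := by
  obtain ⟨w, rfl⟩ := huv
  simp only [IsNodePath, subtreeAt_append] at hv ⊢
  cases h : t.subtreeAt u <;> simp_all

lemma exists_isLeafPath_append (hv : t.IsNodePath v) : ∃ w, t.IsLeafPath (v ++ w) := by
  obtain ⟨s, hs⟩ := Option.isSome_iff_exists.mp hv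
  suffices ∃ w, ∃ x, s.subtreeAt w = some (leaf x) by
    simpa [IsLeafPath, subtreeAt_append, hs] using this
  clear hs
  induction s with
  | leaf x => exact ⟨[], x, rfl⟩
  | node l r ihl _ =>
    obtain ⟨w, x, hw⟩ := ihl
    exact ⟨false :: w, x, hw⟩

lemma discAt_nil (t : HTree) : t.discAt [] = t.disc := by cases t <;> rfl

lemma discAt_append (hs : t.subtreeAt u = some s) (w : List Bool) :
    t.discAt (u ++ w) = s.discAt w := by
  simp [discAt, subtreeAt_append, hs]

lemma isNodePath_append_iff (hs : t.subtreeAt u = some s) (w : List Bool) :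
    t.IsNodePath (u ++ w) ↔ s.IsNodePath w := by
  simp [IsNodePath, subtreeAt_append, hs]

@[simp] lemma discAt_node_false (l r : HTree) (w : List Bool) :
    (node l r).discAt (false :: w) = l.discAt w := rfl

@[simp] lemma discAt_node_true (l r : HTree) (w : List Bool) :
    (node l r).discAt (true :: w) = r.discAt w := rfl

lemma discAt_leaf (x : ℝ) (v : List Bool) : (leaf x).discAt v = 0 := by
  cases v <;> simp [discAt, subtreeAt, disc, leafWeights]

lemma HasSplitQuality.of_subtreeAt (hsq : t.HasSplitQuality q) (hs : t.subtreeAt u = some s) :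
    s.HasSplitQuality q := by
  intro w hw b hwb
  rw [← isNodePath_append_iff hs] at hw hwb
  rw [← List.append_assoc] at hwb
  simpa [← discAt_append hs] using hsq _ hw b hwb

theorem HasSplitQuality.discAt_le_pow_mul_disc (hsq : s.HasSplitQuality q) (hq : 0 ≤ q)
    {w : List Bool} (hw : s.IsNodePath w) : s.discAt w ≤ q ^ w.length * s.disc := by
  induction w using List.reverseRecOn with
  | nil => simp [discAt_nil]
  | append_singleton w b ih =>
    have hw' := hw.of_prefix (List.prefix_append w [b])
    calc s.discAt (w ++ [b]) ≤ q * s.discAt w := hsq w hw' b hw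
      _ ≤ q * (q ^ w.length * s.disc) := mul_le_mul_of_nonneg_left (ih hw') hq
      _ = q ^ (w ++ [b]).length * s.disc := by simp [pow_succ]; ring

noncomputable def absDeviation (t : HTree) (c : ℝ) : ℝ := (t.leafWeights.map fun x => |c - x|).sum

lemma absDeviation_nonneg (t : HTree) (c : ℝ) : 0 ≤ t.absDeviation c :=
  List.sum_nonneg (by simp)

lemma disc_nonneg (t : HTree) : 0 ≤ t.disc := t.absDeviation_nonneg _

lemma disc_le_two_mul_absDeviation (t : HTree) (c : ℝ) : t.disc ≤ 2 * t.absDeviation c :=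
  List.sum_map_abs_mean_sub_le _ c

/- Comparing all nodes with one common centre `c`, rather than each with its own mean, is what
makes the induction go through. -/
theorem sum_discAt_le_two_mul_absDeviation (hM : IsAntichain (· <+: ·) (M : Set (List Bool)))
    (t : HTree) (c : ℝ) : ∑ v ∈ M, t.discAt v ≤ 2 * t.absDeviation c := by
  refine prefixAntichain_induction
    (motive := fun A => ∀ t : HTree, ∑ v ∈ A, t.discAt v ≤ 2 * t.absDeviation c)
    (fun t => by simpa using t.absDeviation_nonneg c)
    (fun t => by simpa [discAt_nil] using t.disc_le_two_mul_absDeviation c)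
    (fun A hA0 ih₀ ih₁ t => ?_) hM t
  cases t with
  | leaf x => simpa [discAt_leaf] using (leaf x).absDeviation_nonneg c
  | node l r =>
    simp only [sum_eq_sum_descend_add_sum_descend hA0, discAt_node_false, discAt_node_true]
    have : (node l r).absDeviation c = l.absDeviation c + r.absDeviation c := by
      simp [absDeviation, leafWeights]
    linarith [ih₀ l, ih₁ r]

theorem sum_discAt_le_two_mul_disc (hM : IsAntichain (· <+: ·) (M : Set (List Bool)))
    (t : HTree) : ∑ v ∈ M, t.discAt v ≤ 2 * t.disc :=
  sum_discAt_le_two_mul_absDeviation hM t _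

lemma le_pow_mul_disc_of_mem (hsq : s.HasSplitQuality q) (hq : 0 ≤ q)
    (hMnode : ∀ p ∈ M, s.IsNodePath p) (hanc : ∀ v ∈ M.strictPrefixes, d ≤ s.discAt v)
    {p : List Bool} (hp : p ∈ M) (hp0 : p ≠ []) : d ≤ q ^ (p.length - 1) * s.disc := by
  have hparent : p.dropLast ∈ M.strictPrefixes := by
    refine mem_strictPrefixes.mpr ⟨p, hp, p.dropLast_prefix, fun h => hp0 ?_⟩
    have := congrArg List.length h
    simp only [List.length_dropLast] at this
    exact List.eq_nil_of_length_eq_zero (by omega)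
  calc d ≤ s.discAt p.dropLast := hanc _ hparent
    _ ≤ q ^ p.dropLast.length * s.disc :=
      hsq.discAt_le_pow_mul_disc hq ((hMnode p hp).of_prefix p.dropLast_prefix)
    _ = q ^ (p.length - 1) * s.disc := by rw [List.length_dropLast]

lemma sum_discAt_le_of_le_half (hsq : s.HasSplitQuality q) (hq0 : 0 ≤ q) (hq : q ≤ 1 / 2)
    (hM : IsAntichain (· <+: ·) (M : Set (List Bool))) (hMnode : ∀ p ∈ M, s.IsNodePath p)
    (hM0 : [] ∉ M) : ∑ p ∈ M, s.discAt p ≤ 2 * q * s.disc := by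
  have hterm : ∀ p ∈ M, s.discAt p ≤ 2 * q * s.disc * (1 / 2) ^ p.length := by
    intro p hp
    obtain ⟨b, w, rfl⟩ := List.exists_cons_of_ne_nil (ne_of_mem_of_not_mem hp hM0)
    have hqw : q ^ w.length ≤ (1 / 2) ^ w.length := pow_le_pow_left₀ hq0 hq _
    calc s.discAt (b :: w) ≤ q ^ (w.length + 1) * s.disc :=
          hsq.discAt_le_pow_mul_disc hq0 (hMnode _ hp)
      _ ≤ 2 * q * s.disc * (1 / 2) ^ (w.length + 1) := by
          rw [pow_succ, pow_succ]
          nlinarith [mul_le_mul_of_nonneg_right hqw (mul_nonneg hq0 s.disc_nonneg)]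
  calc ∑ p ∈ M, s.discAt p ≤ ∑ p ∈ M, 2 * q * s.disc * (1 / 2) ^ p.length :=
        sum_le_sum hterm
    _ = 2 * q * s.disc * ∑ p ∈ M, (1 / 2 : ℝ) ^ p.length := by rw [mul_sum]
    _ ≤ 2 * q * s.disc :=
        mul_le_of_le_one_right (by positivity [s.disc_nonneg]) (sum_half_pow_length_le_one hM)

lemma card_mul_le_of_le_half (hsq : s.HasSplitQuality q) (hq0 : 0 ≤ q) (hq : q ≤ 1 / 2)
    (hM : IsAntichain (· <+: ·) (M : Set (List Bool))) (hMnode : ∀ p ∈ M, s.IsNodePath p)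
    (hM0 : [] ∉ M) (hanc : ∀ v ∈ M.strictPrefixes, d ≤ s.discAt v) :
    #M * d ≤ 2 * s.disc := by
  rcases M.eq_empty_or_nonempty with rfl | hne
  · simpa using s.disc_nonneg
  obtain ⟨p, hp, hmax⟩ := M.exists_max_image List.length hne
  obtain ⟨n, hn⟩ : ∃ n, p.length = n + 1 :=
    Nat.exists_eq_succ_of_ne_zero (by simpa using ne_of_mem_of_not_mem hp hM0)
  have hd : d ≤ q ^ n * s.disc := by
    simpa [hn] using le_pow_mul_disc_of_mem hsq hq0 hMnode hanc hp (ne_of_mem_of_not_mem hp hM0)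
  have hcard : (#M : ℝ) ≤ 2 ^ (n + 1) := card_le_two_pow hM (hn ▸ hmax)
  have hD : 0 ≤ q ^ n * s.disc := mul_nonneg (pow_nonneg hq0 n) s.disc_nonneg
  calc #M * d ≤ #M * (q ^ n * s.disc) := mul_le_mul_of_nonneg_left hd (by positivity)
    _ ≤ 2 ^ (n + 1) * (q ^ n * s.disc) := mul_le_mul_of_nonneg_right hcard hD
    _ = 2 * (2 * q) ^ n * s.disc := by ring
    _ ≤ 2 * 1 * s.disc := by
        gcongr
        · exact s.disc_nonneg
        · exact pow_le_one₀ (by linarith) (by linarith)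
    _ = 2 * s.disc := by ring

lemma card_strictPrefixes_mul_le (hanc : ∀ v ∈ M.strictPrefixes, d ≤ s.discAt v) {n : ℕ}
    (hlen : ∀ p ∈ M, p.length ≤ n) : #M.strictPrefixes * d ≤ 2 * n * s.disc := by
  set S := M.strictPrefixes
  have hS : #S = ∑ j ∈ range n, #{v ∈ S | v.length = j} := by
    refine card_eq_sum_card_fiberwise fun v hv => ?_
    obtain ⟨p, hp, hvp, hne⟩ := mem_strictPrefixes.mp hv
    have := (hvp.length_le.lt_of_ne fun h => hne (hvp.eq_of_length h)).trans_le (hlen p hp)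
    simpa using this
  have hlevel : ∀ j, #{v ∈ S | v.length = j} * d ≤ 2 * s.disc := by
    intro j
    have hlevel_antichain : IsAntichain (· <+: ·) (S.filter (·.length = j) : Set (List Bool)) :=
      fun v hv w hw hne hvw => hne (hvw.eq_of_length (by
        rw [(mem_filter.mp hv).2, (mem_filter.mp hw).2]))
    calc #{v ∈ S | v.length = j} * d = ∑ _v ∈ S with _v.length = j, d := by simp
      _ ≤ ∑ v ∈ S with v.length = j, s.discAt v :=
        sum_le_sum fun v hv => hanc v (mem_filter.mp hv).1
      _ ≤ 2 * s.disc := sum_discAt_le_two_mul_disc hlevel_antichain s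
  calc #S * d = ∑ j ∈ range n, #{v ∈ S | v.length = j} * d := by
        rw [hS]; push_cast; rw [sum_mul]
    _ ≤ ∑ _j ∈ range n, 2 * s.disc := sum_le_sum fun j _ => hlevel j
    _ = 2 * n * s.disc := by simp; ring

lemma card_sub_one_mul_le_of_half_lt (hsq : s.HasSplitQuality q) (hq : 1 / 2 < q) (hq1 : q < 1)
    (hK : 2 ≤ K) (hd : 0 ≤ d) (hM : IsAntichain (· <+: ·) (M : Set (List Bool)))
    (hMnode : ∀ p ∈ M, s.IsNodePath p) (hM0 : [] ∉ M) (hMK : #M ≤ K)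
    (hanc : ∀ v ∈ M.strictPrefixes, d ≤ s.discAt v) :
    ((#M - 1 : ℕ) : ℝ) * d ≤ 2 * Real.logb (1 / q) K * s.disc := by
  have hq0 : 0 < q := by linarith
  have hb : 1 < 1 / q := by rw [lt_div_iff₀ hq0]; linarith
  have hK' : (2 : ℝ) ≤ K := by exact_mod_cast hK
  have hL : 1 ≤ Real.logb (1 / q) K := by
    rw [Real.le_logb_iff_rpow_le hb (by linarith), Real.rpow_one, div_le_iff₀ hq0]
    nlinarith
  rcases M.eq_empty_or_nonempty with rfl | hne
  · simpa using mul_nonneg (by linarith : (0 : ℝ) ≤ 2 * Real.logb (1 / q) K) s.disc_nonneg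
  obtain ⟨p, hp, hmax⟩ := M.exists_max_image List.length hne
  have hp0 : p ≠ [] := ne_of_mem_of_not_mem hp hM0
  have hd_le := le_pow_mul_disc_of_mem hsq hq0.le hMnode hanc hp hp0
  by_cases hshallow : (1 / q) ^ p.length ≤ (K : ℝ)
  · have hlenL : (p.length : ℝ) ≤ Real.logb (1 / q) K := by
      rwa [Real.le_logb_iff_rpow_le hb (by linarith), Real.rpow_natCast]
    have hcard : ((#M - 1 : ℕ) : ℝ) ≤ #M.strictPrefixes := by
      have := card_le_card_strictPrefixes_add_one hM
      exact_mod_cast (by omega : #M - 1 ≤ #M.strictPrefixes)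
    calc ((#M - 1 : ℕ) : ℝ) * d ≤ #M.strictPrefixes * d :=
          mul_le_mul_of_nonneg_right hcard hd
      _ ≤ 2 * p.length * s.disc := card_strictPrefixes_mul_le hanc hmax
      _ ≤ 2 * Real.logb (1 / q) K * s.disc := by gcongr; exact s.disc_nonneg
  · have hdeep : (K : ℝ) * q ^ (p.length - 1) ≤ 2 := by
      rw [one_div_pow, not_le, lt_div_iff₀ (by positivity),
        ← pow_sub_one_mul (by simpa using hp0), ← mul_assoc] at hshallow
      nlinarith [pow_nonneg hq0.le (p.length - 1)]
    calc ((#M - 1 : ℕ) : ℝ) * d ≤ K * d := by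
          gcongr
          exact_mod_cast (Nat.sub_le _ _).trans hMK
      _ ≤ K * (q ^ (p.length - 1) * s.disc) := by gcongr
      _ ≤ 2 * s.disc := by rw [← mul_assoc]; gcongr; exact s.disc_nonneg
      _ ≤ 2 * Real.logb (1 / q) K * s.disc := by
          nlinarith [s.disc_nonneg]

theorem sum_discAt_add_le (hsq : s.HasSplitQuality q) (hq0 : 0 < q) (hq1 : q < 1) (hK : 2 ≤ K)
    (hβ : 1 ≤ β) (hd : 0 ≤ d) (hM : IsAntichain (· <+: ·) (M : Set (List Bool)))
    (hMnode : ∀ p ∈ M, s.IsNodePath p) (hMK : #M ≤ K)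
    (hanc : ∀ v ∈ M.strictPrefixes, d ≤ s.discAt v) :
    ∑ p ∈ M, s.discAt p + β * d * ((#M - 1 : ℕ) : ℝ) ≤
      2 * β * (Real.logb (1 / q) K + 1) * s.disc := by
  have hD := s.disc_nonneg
  have hL : 0 ≤ Real.logb (1 / q) K :=
    Real.logb_nonneg (by rw [lt_div_iff₀ hq0]; linarith) (by exact_mod_cast (by omega : 1 ≤ K))
  have hsum := sum_discAt_le_two_mul_disc hM s
  by_cases hM1 : #M ≤ 1
  · rw [Nat.sub_eq_zero_of_le hM1, Nat.cast_zero, mul_zero, add_zero]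
    nlinarith [mul_nonneg (mul_nonneg (by linarith : (0 : ℝ) ≤ β - 1) hL) hD]
  have hM0 : [] ∉ M := fun h => hM1 (by simp [hM.eq_singleton_nil h])
  rcases le_or_gt q (1 / 2) with hq | hq
  · have hsumq := sum_discAt_le_of_le_half hsq hq0.le hq hM hMnode hM0
    have hcard := card_mul_le_of_le_half hsq hq0.le hq hM hMnode hM0 hanc
    have hqL := Real.self_le_logb_one_div hq0 hq1 (by exact_mod_cast hK : (2 : ℝ) ≤ K)
    have hcast : ((#M - 1 : ℕ) : ℝ) ≤ #M := by exact_mod_cast Nat.sub_le _ _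
    nlinarith [mul_le_mul_of_nonneg_right hcast hd, mul_le_mul_of_nonneg_right hqL hD,
      mul_nonneg (mul_nonneg (by linarith : (0 : ℝ) ≤ β - 1) hL) hD]
  · have hcard := card_sub_one_mul_le_of_half_lt hsq hq hq1 hK hd hM hMnode hM0 hMK hanc
    nlinarith [mul_nonneg (by linarith : (0 : ℝ) ≤ β - 1) hD]

theorem sum_discAt_add_le_mul_discAt (hsq : t.HasSplitQuality q) (hq0 : 0 < q) (hq1 : q < 1)
    (hK : 2 ≤ K) (hβ : 1 ≤ β) (hd : 0 ≤ d) (hu : t.IsNodePath u) (hMu : ∀ p ∈ M, u <+: p)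
    (hM : IsAntichain (· <+: ·) (M : Set (List Bool))) (hMnode : ∀ p ∈ M, t.IsNodePath p)
    (hMK : #M ≤ K) (hanc : ∀ v ∈ M.strictPrefixes, d ≤ t.discAt v) :
    ∑ p ∈ M, t.discAt p + β * d * ((#M - 1 : ℕ) : ℝ) ≤
      2 * β * (Real.logb (1 / q) K + 1) * t.discAt u := by
  classical
  obtain ⟨s, hs⟩ := Option.isSome_iff_exists.mp hu
  set M' := M.preimage (u ++ ·) (List.append_right_injective u).injOn
  have hmem : ∀ w, w ∈ M' ↔ u ++ w ∈ M := fun _ => mem_preimage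
  have hrange : ∀ p ∈ M, p ∈ Set.range (u ++ ·) := hMu
  have hsum : ∑ w ∈ M', s.discAt w = ∑ p ∈ M, t.discAt p := by
    simp only [← discAt_append hs]
    exact sum_preimage _ _ _ _ fun p hp hp' => (hp' (hrange p hp)).elim
  have hcard : #M' = #M := by
    rw [card_preimage, filter_true_of_mem hrange]
  have hM' : IsAntichain (· <+: ·) (M' : Set (List Bool)) := fun v hv w hw hne hvw =>
    hne (List.append_cancel_left (hM.eq ((hmem v).mp hv) ((hmem w).mp hw)
      ((List.prefix_append_right_inj u).mpr hvw)))
  have hanc' : ∀ v ∈ M'.strictPrefixes, d ≤ s.discAt v := by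
    intro v hv
    obtain ⟨w, hw, hvw, hne⟩ := mem_strictPrefixes.mp hv
    rw [← discAt_append hs]
    exact hanc _ (mem_strictPrefixes.mpr ⟨u ++ w, (hmem w).mp hw,
      (List.prefix_append_right_inj u).mpr hvw, fun h => hne (List.append_cancel_left h)⟩)
  have key := sum_discAt_add_le (hsq.of_subtreeAt hs) hq0 hq1 hK hβ hd hM'
    (fun w hw => (isNodePath_append_iff hs w).mp (hMnode _ ((hmem w).mp hw))) (hcard ▸ hMK) hanc'
  rwa [hsum, hcard, ← discAt_nil, ← discAt_append hs, List.append_nil] at key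

lemma IsPruning.isAntichain (hP : t.IsPruning P) : IsAntichain (· <+: ·) (P : Set (List Bool)) := by
  intro v hv w hw hne hvw
  obtain ⟨r, hr⟩ := exists_isLeafPath_append (hP.1 w hw)
  exact hne ((hP.2 _ hr).unique ⟨hv, hvw.trans (w.prefix_append r)⟩ ⟨hw, w.prefix_append r⟩)

lemma IsPruning.exists_comparable (hP : t.IsPruning P) (hv : t.IsNodePath v) :
    ∃ p ∈ P, p <+: v ∨ v <+: p := by
  obtain ⟨r, hr⟩ := exists_isLeafPath_append hv
  obtain ⟨p, ⟨hp, hpr⟩, -⟩ := hP.2 _ hr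
  exact ⟨p, hp, List.prefix_or_prefix_of_prefix hpr (v.prefix_append r)⟩

lemma IsPruning.one_lt_card_filter_prefix (hQ : t.IsPruning Q) (hv : t.IsNodePath v)
    (hvQ : ∀ u ∈ Q, ¬ u <+: v) : 1 < #{u ∈ Q | v <+: u} := by
  obtain ⟨s, hs⟩ := Option.isSome_iff_exists.mp hv
  cases s with
  | leaf x =>
    obtain ⟨u, ⟨hu, huv⟩, -⟩ := hQ.2 v ⟨x, hs⟩
    exact absurd huv (hvQ u hu)
  | node l r =>
    have hbelow : ∀ b : Bool, ∃ u ∈ Q, v ++ [b] <+: u := by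
      intro b
      have hvb : t.IsNodePath (v ++ [b]) := by
        cases b <;> simp [IsNodePath, subtreeAt_append, hs, subtreeAt]
      obtain ⟨u, hu, h | h⟩ := hQ.exists_comparable hvb
      · rcases List.prefix_concat_iff.mp h with rfl | h
        · exact ⟨_, hu, List.prefix_refl _⟩
        · exact absurd h (hvQ u hu)
      · exact ⟨u, hu, h⟩
    obtain ⟨u₀, hu₀, h₀⟩ := hbelow false
    obtain ⟨u₁, hu₁, h₁⟩ := hbelow true
    refine one_lt_card.mpr ⟨u₀, mem_filter.mpr ⟨hu₀, (v.prefix_append _).trans h₀⟩,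
      u₁, mem_filter.mpr ⟨hu₁, (v.prefix_append _).trans h₁⟩, ?_⟩
    rintro rfl
    rcases List.prefix_or_prefix_of_prefix h₀ h₁ with h | h <;> simp at h

theorem IsPruning.card_filter_le_sum (hP : t.IsPruning P) (hQ : t.IsPruning Q)
    (hcard : #P = #Q) :
    #{p ∈ P | ¬ ∃ u ∈ Q, u <+: p} ≤ ∑ u ∈ Q, (#{p ∈ P | u <+: p} - 1) := by
  set A := P.filter fun p => ¬ ∃ u ∈ Q, u <+: p
  set Z := Q.filter fun u => ¬ ∃ p ∈ P, u <+: p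
  have hPsplit : #P = #A + ∑ u ∈ Q, #{p ∈ P | u <+: p} := by
    simpa only [card_eq_sum_ones] using
      sum_eq_sum_filter_add_sum_sum_filter_prefix (P := P) hQ.isAntichain fun _ => 1
  have hfibers : ∑ u ∈ Q, #{p ∈ P | u <+: p} ≤
      ∑ u ∈ Q, (#{p ∈ P | u <+: p} - 1) + #{u ∈ Q | ∃ p ∈ P, u <+: p} := by
    rw [card_filter, ← sum_add_distrib]
    refine sum_le_sum fun u _ => ?_
    split_ifs with h
    · omega
    · simp [filter_eq_empty_iff.mpr fun p hp hup => h ⟨p, hp, hup⟩]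
  have hQsplit : #{u ∈ Q | ∃ p ∈ P, u <+: p} + #Z = #Q :=
    card_filter_add_card_filter_not _
  have hZ : #A * 2 ≤ #Z * 1 := by
    refine card_mul_le_card_mul (· <+: ·) (fun p hp => ?_) fun u hu => ?_
    · obtain ⟨hpP, hpQ⟩ := mem_filter.mp hp
      refine (hQ.one_lt_card_filter_prefix (hP.1 p hpP) fun u hu hup => hpQ ⟨u, hu, hup⟩).trans_le
        (card_le_card fun u hu => ?_)
      obtain ⟨huQ, hpu⟩ := mem_filter.mp hu
      refine mem_bipartiteAbove _ |>.mpr ⟨mem_filter.mpr ⟨huQ, ?_⟩, hpu⟩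
      rintro ⟨p', hp', hup'⟩
      obtain rfl := hP.isAntichain.eq hpP hp' (hpu.trans hup')
      exact hpQ ⟨u, huQ, hup'⟩
    · refine card_le_one.mpr fun p₁ hp₁ p₂ hp₂ => ?_
      simp only [mem_bipartiteBelow] at hp₁ hp₂
      have hp₁P := (mem_filter.mp hp₁.1).1
      have hp₂P := (mem_filter.mp hp₂.1).1
      rcases List.prefix_or_prefix_of_prefix hp₁.2 hp₂.2 with h | h
      · exact hP.isAntichain.eq hp₁P hp₂P h
      · exact (hP.isAntichain.eq hp₂P hp₁P h).symm
  omega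

theorem IsPruning.discP_le_sum (hP : t.IsPruning P) (hQ : t.IsPruning Q)
    (hcard : #P = #Q) {B : ℝ} (hB : 0 ≤ B) (hPB : ∀ p ∈ P, t.discAt p ≤ B) :
    t.discP P ≤
      ∑ u ∈ Q, (∑ p ∈ P with u <+: p, t.discAt p + B * ((#{p ∈ P | u <+: p} - 1 : ℕ) : ℝ)) := by
  have habove : ∑ p ∈ P with ¬ ∃ u ∈ Q, u <+: p, t.discAt p ≤
      B * ∑ u ∈ Q, ((#{p ∈ P | u <+: p} - 1 : ℕ) : ℝ) :=
    calc ∑ p ∈ P with ¬ ∃ u ∈ Q, u <+: p, t.discAt p ≤ #{p ∈ P | ¬ ∃ u ∈ Q, u <+: p} * B :=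
          (sum_le_card_nsmul _ _ _ fun p hp => hPB p (mem_filter.mp hp).1).trans_eq
            (nsmul_eq_mul _ _)
      _ ≤ B * ∑ u ∈ Q, ((#{p ∈ P | u <+: p} - 1 : ℕ) : ℝ) := by
          rw [mul_comm]
          gcongr
          exact_mod_cast hP.card_filter_le_sum hQ hcard
  rw [discP, sum_eq_sum_filter_add_sum_sum_filter_prefix hQ.isAntichain, sum_add_distrib,
    ← mul_sum]
  linarith

end HTree

theorem stmt7_general (t : HTree)
    (q : ℝ) (hq0 : 0 < q) (hq1 : q < 1) (hsq : t.HasSplitQuality q)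
    (K : ℕ) (hK : 2 ≤ K)
    (P Q : Finset (List Bool)) (hP : t.IsPruning P) (hQ : t.IsPruning Q)
    (hPcard : P.card = K) (hQcard : Q.card = K)
    (β d : ℝ) (hβ : 1 ≤ β) (hd : 0 ≤ d)
    (hPd : ∀ v ∈ P, t.discAt v ≤ β * d)
    (hanc : ∀ u, t.IsNodePath u → (∃ v ∈ P, u <+: v ∧ u ≠ v) → d ≤ t.discAt u) :
    t.discP P ≤ 2 * β * (Real.log K / Real.log (1 / q) + 1) * t.discP Q := by
  rw [Real.log_div_log]
  calc t.discP P
      ≤ ∑ u ∈ Q, (∑ p ∈ P with u <+: p, t.discAt p + β * d * ((#{p ∈ P | u <+: p} - 1 : ℕ) : ℝ)) :=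
        hP.discP_le_sum hQ (hPcard.trans hQcard.symm) (mul_nonneg (by linarith) hd) hPd
    _ ≤ ∑ u ∈ Q, 2 * β * (Real.logb (1 / q) K + 1) * t.discAt u := by
        refine sum_le_sum fun u hu => HTree.sum_discAt_add_le_mul_discAt hsq hq0 hq1 hK hβ hd
          (hQ.1 u hu) (fun p hp => (mem_filter.mp hp).2)
          (hP.isAntichain.subset (filter_subset _ _)) (fun p hp => hP.1 p (mem_filter.mp hp).1)
          (hPcard ▸ card_filter_le _ _) fun v hv => ?_
        obtain ⟨p, hp, hvp, hne⟩ := mem_strictPrefixes.mp hv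
        exact hanc v ((hP.1 p (mem_filter.mp hp).1).of_prefix hvp)
          ⟨p, (mem_filter.mp hp).1, hvp, hne⟩
    _ = 2 * β * (Real.logb (1 / q) K + 1) * t.discP Q := by rw [HTree.discP, mul_sum]

/-- Deterministic core of Lemma 5.3: if `T` has split quality `q ∈ (0,1)`, `P` and `Q` are
prunings of size `K ≥ 2`, every node of `P` has discrepancy at most `β·d`, and every strict
ancestor of a node of `P` has discrepancy at least `d`, then
`D_P ≤ 2β(log K/log(1/q) + 1)·D_Q`. -/
theorem stmt7 (t : HTree) (hw : t.NonnegWeights)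
    (q : ℝ) (hq0 : 0 < q) (hq1 : q < 1) (hsq : t.HasSplitQuality q)
    (K : ℕ) (hK : 2 ≤ K)
    (P Q : Finset (List Bool)) (hP : t.IsPruning P) (hQ : t.IsPruning Q)
    (hPcard : P.card = K) (hQcard : Q.card = K)
    (β d : ℝ) (hβ : 1 ≤ β) (hd : 0 ≤ d)
    (hPd : ∀ v ∈ P, t.discAt v ≤ β * d)
    (hanc : ∀ u, t.IsNodePath u → (∃ v ∈ P, u <+: v ∧ u ≠ v) → d ≤ t.discAt u) :
    t.discP P ≤ 2 * β * (Real.log K / Real.log (1 / q) + 1) * t.discP Q :=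
  stmt7_general t q hq0 hq1 hsq K hK P Q hP hQ hPcard hQcard β d hβ hd hPd hanc
end
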